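/- (Claim 2.) Let k ≥ 2, ℓ, m ≥ 1 be integers, n = ℓ^{k−1}m, f : {0,1}^m → {−1,1}, and μ a probability distribution on {0,1}^m. Then for all S^1_0, S^1_1, …, S^{k−1}_0, S^{k−1}_1 ∈ [ℓ]^m, H^f_k(S^1_0, S^1_1, …, S^{k−1}_0, S^{k−1}_1) ≤ 2^{(2^{k−1}−1)r} / 2^{2^{k−1}m}, where r_i = |{α ∈ [m] : S^i_0[α] = S^i_1[α]}| and r = r_1 + ⋯ + r_{k−1}. -/

import Mathlib

open scoped BigOperators

/-- `x ← S^1,…,S^{K}`: with `x ∈ {0,1}^n` (`n = ℓ^K·m`) viewed as `m` blocks, each a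
`K`-dimensional array of side `ℓ`, the `α`-th bit of the result is
`x[α][S^1[α],…,S^K[α]]`. -/
def mask {K ℓ m : ℕ} (x : Fin m → (Fin K → Fin ℓ) → Bool)
    (S : Fin K → Fin m → Fin ℓ) : Fin m → Bool :=
  fun α => x α (fun i => S i α)

/-- The masked function `F^f_k (x, S^1,…,S^{k-1}) = f(x ← S^1,…,S^{k-1})`. -/
def Ffun {K ℓ m : ℕ} (f : (Fin m → Bool) → ℝ)
    (p : (Fin m → (Fin K → Fin ℓ) → Bool) × (Fin K → Fin m → Fin ℓ)) : ℝ :=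
  f (mask p.1 p.2)

/-- A probability distribution on a finite set. -/
def IsProbDist {D : Type*} [Fintype D] (μ : D → ℝ) : Prop :=
  (∀ x, 0 ≤ μ x) ∧ ∑ x, μ x = 1

/-- The distribution `λ(x,S^1,…,S^{k-1}) = μ(x ← S^1,…,S^{k-1}) / (ℓ^{m(k-1)} 2^{n-m})`. -/
noncomputable def lamDist (k ℓ m n : ℕ) (μ : (Fin m → Bool) → ℝ)
    (p : (Fin m → (Fin (k - 1) → Fin ℓ) → Bool) × (Fin (k - 1) → Fin m → Fin ℓ)) : ℝ :=
  μ (mask p.1 p.2) / ((ℓ : ℝ) ^ (m * (k - 1)) * 2 ^ (n - m))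

/-- A cylinder intersection on the `k`-party domain `{0,1}^n × ([ℓ]^m)^{k-1}`
(one player holds `x`, and one player holds each `S^i`): a conjunction of a cylinder
not depending on `x` and, for each `i`, a cylinder not depending on `S^i`. -/
def IsCylinderIntersection {X V : Type*} {K : ℕ}
    (φ : X × (Fin K → V) → Bool) : Prop :=
  ∃ (ψ₀ : X × (Fin K → V) → Bool) (ψ : Fin K → X × (Fin K → V) → Bool),
    (∀ x x' S, ψ₀ (x, S) = ψ₀ (x', S)) ∧
    (∀ i x S S', (∀ j, j ≠ i → S j = S' j) → ψ i (x, S) = ψ i (x, S')) ∧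
    (∀ p, φ p = (ψ₀ p && decide (∀ i, ψ i p = true)))

/-- Interpret a boolean as the real `0` or `1`. -/
noncomputable def bval (b : Bool) : ℝ := if b then 1 else 0

/-- `disc^φ_{k,λ}(F) = |E_{y∼λ}[F(y)φ(y)]|`. -/
noncomputable def discPhi {D : Type*} [Fintype D] (lam : D → ℝ) (F : D → ℝ)
    (φ : D → Bool) : ℝ :=
  |∑ y, lam y * F y * bval (φ y)|

/-- `disc_{k,λ}(F)`: the supremum of `disc^φ_{k,λ}(F)` over cylinder intersections `φ`. -/
noncomputable def disc {X V : Type*} [Fintype X] [Fintype V] {K : ℕ}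
    (lam : X × (Fin K → V) → ℝ) (F : X × (Fin K → V) → ℝ) : ℝ :=
  sSup { t | ∃ φ, IsCylinderIntersection φ ∧ t = discPhi lam F φ }

/-- The character `χ_S(x) = (-1)^{Σ_{i∈S} x_i}`. -/
noncomputable def chiChar {m : ℕ} (S : Finset (Fin m)) (z : Fin m → Bool) : ℝ :=
  ∏ i ∈ S, (if z i then (-1 : ℝ) else 1)

/-- `f` is `(μ,d)`-orthogonal: `E_{x∼μ}[f(x)χ_S(x)] = 0` for every `S` with `|S| < d`. -/
def Orthogonal {m : ℕ} (μ : (Fin m → Bool) → ℝ) (d : ℕ) (f : (Fin m → Bool) → ℝ) : Prop :=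
  ∀ S : Finset (Fin m), S.card < d → ∑ z, μ z * f z * chiChar S z = 0

/-- `H^f_k(S^1_0,S^1_1,…,S^{k-1}_0,S^{k-1}_1)`: the absolute value of the expectation,
over `x` uniform on `{0,1}^n` (`n = ℓ^{k-1}m`), of
`∏_{u ∈ {0,1}^{k-1}} f(x ← S^1_{u_1},…,S^{k-1}_{u_{k-1}}) μ(x ← S^1_{u_1},…,S^{k-1}_{u_{k-1}})`. -/
noncomputable def Hfun (k ℓ m : ℕ) (f μ : (Fin m → Bool) → ℝ)
    (S0 S1 : Fin (k - 1) → Fin m → Fin ℓ) : ℝ :=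
  |(∑ x : Fin m → (Fin (k - 1) → Fin ℓ) → Bool,
      ∏ u : Fin (k - 1) → Bool,
        f (mask x (fun i => if u i then S1 i else S0 i)) *
          μ (mask x (fun i => if u i then S1 i else S0 i))) /
    (2 : ℝ) ^ (ℓ ^ (k - 1) * m)|

/-!
Since `|f| = 1`, the numerator of `H` is at most `∑_x ∏_u μ(x ← S_u)`, where `S_u` is the vertex
`(S^1_{u_1}, …, S^{k-1}_{u_{k-1}})` of the combinatorial cube. Grouping the `x` by the tuple
`w = (x ← S_u)_u` and using `∑_w ∏_u μ(w_u) = 1`, it suffices to bound the size of every fibre.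
The fibre count factors over the blocks `α`: the array `x[α]` is prescribed on the cube vertices
`(S^i_{u_i}[α])_i`, of which at least `2^{K-r_α}` are distinct (`K = k-1`, and `r_α` the number
of `i` with `S^i_0[α] = S^i_1[α]`), and `2^K ≤ 2^{K-t} + (2^K - 1) t` turns the resulting
bound into the claimed exponent.
-/

open Finset

def cubeVertex {ι β : Type*} (a b : ι → β) (u : ι → Bool) : ι → β :=
  fun i => if u i then b i else a i

lemma card_filter_forall_comp_eq_mul_le {U A : Type*} [Fintype U] [Fintype A] [DecidableEq A]
    (c : U → A) (v : U → Bool) :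
    #{g : A → Bool | ∀ u, g (c u) = v u} * 2 ^ #(univ.image c) ≤ 2 ^ Fintype.card A := by
  set R := univ.image c
  have hrestrict : #{g : A → Bool | ∀ u, g (c u) = v u} ≤ 2 ^ (Fintype.card A - #R) := by
    have hinj : Set.InjOn (fun g : A → Bool => fun a : {a // a ∉ R} => g a)
        {g : A → Bool | ∀ u, g (c u) = v u} := by
      intro g hg g' hg' hgg'
      funext a
      by_cases ha : a ∈ R
      · obtain ⟨u, -, rfl⟩ := mem_image.mp ha
        simp_all
      · exact congrFun hgg' ⟨a, ha⟩
    calc _ ≤ #(univ : Finset ({a // a ∉ R} → Bool)) :=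
          card_le_card_of_injOn _ (fun _ _ => mem_univ _) (by simpa using hinj)
      _ = 2 ^ (Fintype.card A - #R) := by
          simp [Fintype.card_subtype_compl, Fintype.card_coe]
  calc _ ≤ 2 ^ (Fintype.card A - #R) * 2 ^ #R := Nat.mul_le_mul_right _ hrestrict
    _ = 2 ^ Fintype.card A := by
      rw [← pow_add, Nat.sub_add_cancel (card_le_univ R)]

lemma two_pow_le_card_image_cubeVertex {ι L : Type*} [Fintype ι] [DecidableEq ι]
    [DecidableEq L] (a b : ι → L) :
    2 ^ (Fintype.card ι - #{i | a i = b i}) ≤ #(univ.image (cubeVertex a b)) := by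
  set T : Finset ι := {i | a i = b i}
  -- reading off which of `a i`, `b i` a vertex uses outside `T` recovers `u` there
  set read : (ι → L) → ({i // i ∉ T} → Bool) := fun d i => decide (d i = b i)
  have hsurj : univ.image (read ∘ cubeVertex a b) = univ := by
    refine eq_univ_of_forall fun w => mem_image.mpr ?_
    refine ⟨fun i => if h : i ∈ T then false else w ⟨i, h⟩, mem_univ _,
      funext fun i => ?_⟩
    have hi : a i ≠ b i := by simpa [T] using i.2
    by_cases hw : w i <;> simp [read, cubeVertex, i.2, hw, hi]
  calc 2 ^ (Fintype.card ι - #T) = #(univ.image (read ∘ cubeVertex a b)) := by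
        simp [hsurj, Fintype.card_subtype_compl, Fintype.card_coe]
    _ ≤ #(univ.image (cubeVertex a b)) := by
        rw [← image_image]; exact card_image_le

lemma two_pow_le_two_pow_sub_add_mul (K t : ℕ) : 2 ^ K ≤ 2 ^ (K - t) + (2 ^ K - 1) * t := by
  rcases Nat.eq_zero_or_pos t with rfl | ht
  · simp
  · have := Nat.one_le_two_pow (n := K - t)
    have := Nat.one_le_two_pow (n := K)
    have := Nat.mul_le_mul_left (2 ^ K - 1) ht
    omega

lemma card_filter_forall_cubeVertex_mul_le {ι L : Type*} [Fintype ι] [DecidableEq ι]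
    [Fintype L] [DecidableEq L] (a b : ι → L) (v : (ι → Bool) → Bool) :
    #{g : (ι → L) → Bool | ∀ u, g (cubeVertex a b u) = v u} * 2 ^ 2 ^ Fintype.card ι ≤
      2 ^ Fintype.card L ^ Fintype.card ι *
        2 ^ ((2 ^ Fintype.card ι - 1) * #{i | a i = b i}) := by
  have hexp : 2 ^ Fintype.card ι ≤
      #(univ.image (cubeVertex a b)) + (2 ^ Fintype.card ι - 1) * #{i | a i = b i} :=
    (two_pow_le_two_pow_sub_add_mul _ _).trans
      (Nat.add_le_add_right (two_pow_le_card_image_cubeVertex a b) _)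
  calc _ ≤ #{g : (ι → L) → Bool | ∀ u, g (cubeVertex a b u) = v u} *
        (2 ^ #(univ.image (cubeVertex a b)) *
          2 ^ ((2 ^ Fintype.card ι - 1) * #{i | a i = b i})) := by
        rw [← pow_add]; gcongr; norm_num
    _ ≤ _ := by
        rw [← mul_assoc]
        gcongr
        simpa using card_filter_forall_comp_eq_mul_le (cubeVertex a b) v

lemma card_filter_forall_mask_eq {K ℓ m : ℕ} (S0 S1 : Fin K → Fin m → Fin ℓ)
    (w : (Fin K → Bool) → Fin m → Bool) :
    #{x : Fin m → (Fin K → Fin ℓ) → Bool | (fun u => mask x (cubeVertex S0 S1 u)) = w} =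
      ∏ α, #{g : (Fin K → Fin ℓ) → Bool |
        ∀ u, g (cubeVertex (fun i => S0 i α) (fun i => S1 i α) u) = w u α} := by
  rw [← Fintype.card_piFinset]
  congr 1
  ext x
  simp only [mem_filter, mem_univ, true_and, Fintype.mem_piFinset, funext_iff, mask,
    cubeVertex, ite_apply]
  exact forall_comm

lemma card_fiber_mask_mul_le {K ℓ m : ℕ} (S0 S1 : Fin K → Fin m → Fin ℓ)
    (w : (Fin K → Bool) → Fin m → Bool) :
    #{x : Fin m → (Fin K → Fin ℓ) → Bool | (fun u => mask x (cubeVertex S0 S1 u)) = w} *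
        2 ^ (2 ^ K * m) ≤
      2 ^ (ℓ ^ K * m) * 2 ^ ((2 ^ K - 1) * ∑ i, #{α | S0 i α = S1 i α}) := by
  have hr : ∑ i, #{α | S0 i α = S1 i α} = ∑ α, #{i | S0 i α = S1 i α} := by
    simp only [card_filter]; exact sum_comm
  calc _ = ∏ α, #{g : (Fin K → Fin ℓ) → Bool |
          ∀ u, g (cubeVertex (fun i => S0 i α) (fun i => S1 i α) u) = w u α} * 2 ^ 2 ^ K := by
        rw [card_filter_forall_mask_eq, prod_mul_distrib, prod_const, card_univ,
          Fintype.card_fin, ← pow_mul]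
    _ ≤ ∏ α, 2 ^ ℓ ^ K * 2 ^ ((2 ^ K - 1) * #{i | S0 i α = S1 i α}) := by
        refine prod_le_prod' fun α _ => ?_
        simpa only [Fintype.card_fin] using
          card_filter_forall_cubeVertex_mul_le (fun i => S0 i α) (fun i => S1 i α) (w · α)
    _ = _ := by
        rw [prod_mul_distrib, prod_const, card_univ, Fintype.card_fin, ← pow_mul,
          prod_pow_eq_pow_sum, ← mul_sum, hr]

lemma sum_comp_le_of_card_fiber_le {X Y : Type*} [Fintype X] [Fintype Y] [DecidableEq Y]
    (φ : X → Y) (G : Y → ℝ) (hG : ∀ y, 0 ≤ G y) (C : ℝ)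
    (hC : ∀ y, (#{x | φ x = y} : ℝ) ≤ C) :
    ∑ x, G (φ x) ≤ C * ∑ y, G y := by
  rw [← sum_fiberwise' univ φ G, mul_sum]
  gcongr with y
  rw [sum_const, nsmul_eq_mul]
  exact mul_le_mul_of_nonneg_right (hC y) (hG y)

lemma sum_prod_eq_one_of_isProbDist {D U : Type*} [Fintype D] [Fintype U] [DecidableEq U]
    {μ : D → ℝ} (hμ : IsProbDist μ) : ∑ w : U → D, ∏ u, μ (w u) = 1 := by
  rw [← Fintype.prod_sum (fun _ : U => μ)]
  simp [hμ.2]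

theorem statement6_general (k ℓ m : ℕ)
    (f : (Fin m → Bool) → ℝ) (hf : ∀ z, f z = 1 ∨ f z = -1)
    (μ : (Fin m → Bool) → ℝ) (hμ : IsProbDist μ)
    (S0 S1 : Fin (k - 1) → Fin m → Fin ℓ)
    (r : ℕ)
    (hr : r = ∑ i : Fin (k - 1),
      (Finset.univ.filter (fun α : Fin m => S0 i α = S1 i α)).card) :
    Hfun k ℓ m f μ S0 S1 ≤
      (2 : ℝ) ^ ((2 ^ (k - 1) - 1) * r) / (2 : ℝ) ^ (2 ^ (k - 1) * m) := by
  set C : ℝ := 2 ^ (ℓ ^ (k - 1) * m) * 2 ^ ((2 ^ (k - 1) - 1) * r) / 2 ^ (2 ^ (k - 1) * m)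
  have hfμ : ∀ z, |f z * μ z| = μ z := fun z => by
    rcases hf z with h | h <;> simp [h, abs_of_nonneg (hμ.1 z)]
  have hsum : |∑ x : Fin m → (Fin (k - 1) → Fin ℓ) → Bool, ∏ u,
      f (mask x (cubeVertex S0 S1 u)) * μ (mask x (cubeVertex S0 S1 u))| ≤ C :=
    calc _ ≤ ∑ x : Fin m → (Fin (k - 1) → Fin ℓ) → Bool,
          ∏ u, μ (mask x (cubeVertex S0 S1 u)) := by
          refine (abs_sum_le_sum_abs _ _).trans_eq (sum_congr rfl fun x _ => ?_)
          rw [abs_prod]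
          exact prod_congr rfl fun u _ => hfμ _
      _ ≤ C * ∑ w : (Fin (k - 1) → Bool) → Fin m → Bool, ∏ u, μ (w u) := by
          refine sum_comp_le_of_card_fiber_le (fun x u => mask x (cubeVertex S0 S1 u))
            (fun w => ∏ u, μ (w u)) (fun w => prod_nonneg fun u _ => hμ.1 _) C fun w => ?_
          rw [le_div_iff₀ (by positivity), hr]
          exact_mod_cast card_fiber_mask_mul_le S0 S1 w
      _ = C := by rw [sum_prod_eq_one_of_isProbDist hμ, mul_one]
  rw [Hfun, abs_div, abs_pow, abs_two, div_le_iff₀ (by positivity)]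
  calc _ ≤ C := hsum
    _ = _ := by ring

/-- Claim 2: `H^f_k(S^1_0,…,S^{k-1}_1) ≤ 2^{(2^{k-1}-1)r} / 2^{2^{k-1}m}`, where
`r_i = |{α : S^i_0[α] = S^i_1[α]}|` and `r = r_1 + ⋯ + r_{k-1}`. -/
theorem statement6 (k ℓ m : ℕ) (hk : 2 ≤ k) (hℓ : 1 ≤ ℓ) (hm : 1 ≤ m)
    (n : ℕ) (hn : n = ℓ ^ (k - 1) * m)
    (f : (Fin m → Bool) → ℝ) (hf : ∀ z, f z = 1 ∨ f z = -1)
    (μ : (Fin m → Bool) → ℝ) (hμ : IsProbDist μ)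
    (S0 S1 : Fin (k - 1) → Fin m → Fin ℓ)
    (r : ℕ)
    (hr : r = ∑ i : Fin (k - 1),
      (Finset.univ.filter (fun α : Fin m => S0 i α = S1 i α)).card) :
    Hfun k ℓ m f μ S0 S1 ≤
      (2 : ℝ) ^ ((2 ^ (k - 1) - 1) * r) / (2 : ℝ) ^ (2 ^ (k - 1) * m) :=
  statement6_general k ℓ m f hf μ hμ S0 S1 r hr
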